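/- arXiv:2403.07336 — 2 statements merged into one kernel-verified Lean document; each statement's English description precedes it below -/
import Mathlib

section
/- Discrete Sobolev inequality: for any K-periodic v ∈ ℂ^K with K·Δx = L, the sup norm satisfies ‖v‖_∞ ≤ L̂ (‖v‖² + ‖δ⁺ₓ v‖²)^{1/2}, where L̂ = √2 · max{√L, 1/√L}, ‖v‖² = Δx Σ_{k=1}^K |v_k|², and ‖v‖_∞ = max_k |v_k|. -/
/-!
Over one period the squared norms of a periodic sequence `u` vary by at most
`∑ |‖u (k+1)‖² - ‖u k‖²| ≤ ∑ ‖u (k+1) - u k‖ (‖u (k+1)‖ + ‖u k‖) ≤ 2 √D √S` (Cauchy–Schwarz, using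
that the shifted sum of squares is again `S`), where `S` and `D` sum the squared values and squared
differences. Averaging over the period gives `‖u i‖² ≤ S / K + 2 √D √S`. After scaling by `Δx`,
AM-GM bounds `2 √D √S` by `‖v‖² + ‖δ⁺ₓ v‖²`, and `S / K = ‖v‖² / L`; the constant
`L̂² = 2 max(L, 1/L)` absorbs both.
-/

open Finset

theorem dist_le_sum_range_dist {α : Type*} [PseudoMetricSpace α] (f : ℕ → α) {i j n : ℕ}
    (hi : i ≤ n) (hj : j ≤ n) :
    dist (f i) (f j) ≤ ∑ k ∈ range n, dist (f k) (f (k + 1)) := by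
  wlog hij : i ≤ j generalizing i j
  · rw [dist_comm]; exact this hj hi (le_of_not_ge hij)
  refine (dist_le_Ico_sum_dist f hij).trans <|
    sum_le_sum_of_subset_of_nonneg (fun k hk => ?_) fun _ _ _ => dist_nonneg
  simp only [mem_Ico, mem_range] at hk ⊢
  omega

theorem sum_range_succ_eq_sum_range {M : Type*} [AddCommMonoid M] [IsRightCancelAdd M]
    {f : ℕ → M} {n : ℕ} (hf : f n = f 0) :
    ∑ k ∈ range n, f (k + 1) = ∑ k ∈ range n, f k := by
  apply add_right_cancel (b := f 0)
  rw [← sum_range_succ', sum_range_succ, hf]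

section Periodic

variable {E : Type*} [SeminormedAddCommGroup E] {u : ℕ → E} {n : ℕ}

theorem sum_range_abs_sub_sq_norm_le (hu : u n = u 0) :
    ∑ k ∈ range n, |‖u (k + 1)‖ ^ 2 - ‖u k‖ ^ 2| ≤
      2 * √(∑ k ∈ range n, ‖u (k + 1) - u k‖ ^ 2) * √(∑ k ∈ range n, ‖u k‖ ^ 2) := by
  set d := fun k => ‖u (k + 1) - u k‖
  have hterm : ∀ k, |‖u (k + 1)‖ ^ 2 - ‖u k‖ ^ 2| ≤ d k * ‖u (k + 1)‖ + d k * ‖u k‖ := by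
    intro k
    rw [sq_sub_sq, abs_mul, abs_of_nonneg (by positivity), ← mul_add, mul_comm]
    gcongr
    exact abs_norm_sub_norm_le _ _
  have hshift : ∑ k ∈ range n, ‖u (k + 1)‖ ^ 2 = ∑ k ∈ range n, ‖u k‖ ^ 2 :=
    sum_range_succ_eq_sum_range (f := fun k => ‖u k‖ ^ 2) (by simp only [hu])
  calc ∑ k ∈ range n, |‖u (k + 1)‖ ^ 2 - ‖u k‖ ^ 2|
      ≤ ∑ k ∈ range n, d k * ‖u (k + 1)‖ + ∑ k ∈ range n, d k * ‖u k‖ := by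
        rw [← sum_add_distrib]; exact sum_le_sum fun k _ => hterm k
    _ ≤ _ := by
        have h₁ := Real.sum_mul_le_sqrt_mul_sqrt (range n) d fun k => ‖u (k + 1)‖
        have h₂ := Real.sum_mul_le_sqrt_mul_sqrt (range n) d fun k => ‖u k‖
        rw [hshift] at h₁
        linarith

theorem sq_norm_le_average_add (hu : u n = u 0) {i : ℕ} (hi : i < n) :
    ‖u i‖ ^ 2 ≤ (∑ k ∈ range n, ‖u k‖ ^ 2) / n +
      2 * √(∑ k ∈ range n, ‖u (k + 1) - u k‖ ^ 2) * √(∑ k ∈ range n, ‖u k‖ ^ 2) := by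
  set G := 2 * √(∑ k ∈ range n, ‖u (k + 1) - u k‖ ^ 2) * √(∑ k ∈ range n, ‖u k‖ ^ 2)
  have hvar : ∀ j ≤ n, ‖u i‖ ^ 2 ≤ ‖u j‖ ^ 2 + G := fun j hj => by
    have := (dist_le_sum_range_dist (fun k => ‖u k‖ ^ 2) hi.le hj).trans_eq
      (sum_congr rfl fun k _ => by rw [Real.dist_eq, abs_sub_comm])
    replace := this.trans (sum_range_abs_sub_sq_norm_le hu)
    rw [Real.dist_eq] at this
    linarith [le_abs_self (‖u i‖ ^ 2 - ‖u j‖ ^ 2)]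
  have hn : (0 : ℝ) < n := by exact_mod_cast hi.trans_le' (Nat.zero_le i)
  rw [← sub_le_iff_le_add, le_div_iff₀ hn]
  calc (‖u i‖ ^ 2 - G) * n = ∑ _k ∈ range n, (‖u i‖ ^ 2 - G) := by
        rw [sum_const, card_range, nsmul_eq_mul, mul_comm]
    _ ≤ ∑ k ∈ range n, ‖u k‖ ^ 2 :=
        sum_le_sum fun k hk => by linarith [hvar k (mem_range.mp hk).le]

end Periodic

noncomputable def sobolevConst (L : ℝ) : ℝ := √2 * max √L (1 / √L)

theorem two_le_sobolevConst_sq {L : ℝ} (hL : 0 < L) : 2 ≤ sobolevConst L ^ 2 := by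
  have h : √L * (1 / √L) = 1 := mul_one_div_cancel (Real.sqrt_pos.mpr hL).ne'
  have : 1 ≤ max √L (1 / √L) ^ 2 := by
    rw [sq]
    exact h.symm.le.trans <| mul_le_mul (le_max_left _ _) (le_max_right _ _) (by positivity)
      ((Real.sqrt_nonneg L).trans (le_max_left _ _))
  rw [sobolevConst, mul_pow, Real.sq_sqrt zero_le_two]
  linarith

theorem two_div_le_sobolevConst_sq {L : ℝ} (hL : 0 < L) : 2 / L ≤ sobolevConst L ^ 2 := by
  have : 1 / L ≤ max √L (1 / √L) ^ 2 := by
    calc 1 / L = (1 / √L) ^ 2 := by rw [div_pow, one_pow, Real.sq_sqrt hL.le]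
      _ ≤ _ := pow_le_pow_left₀ (by positivity) (le_max_right _ _) 2
  rw [sobolevConst, mul_pow, Real.sq_sqrt zero_le_two]
  rw [div_eq_mul_one_div 2 L]
  linarith

theorem le_sobolevConst_sq_mul {L h S D x : ℝ} {K : ℕ} (hL : 0 < L) (hhK : h * K = L)
    (hS : 0 ≤ S) (hD : 0 ≤ D) (hx : x ≤ S / K + 2 * √D * √S) :
    x ≤ sobolevConst L ^ 2 * (h * S + D / h) := by
  have hh : 0 < h := pos_of_mul_pos_left (hhK ▸ hL) (Nat.cast_nonneg K)
  set A := h * S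
  set B := D / h
  have hA : 0 ≤ A := by positivity
  have hB : 0 ≤ B := by positivity
  have haverage : S / K = A / L := by rw [← hhK, mul_div_mul_left _ _ hh.ne']
  have hamgm : 2 * √D * √S ≤ A + B := by
    have hDS : √D * √S = √A * √B := by
      rw [← Real.sqrt_mul hD, ← Real.sqrt_mul hA]
      congr 1
      simp only [A, B]
      field_simp
    have := two_mul_le_add_sq √A √B
    rw [Real.sq_sqrt hA, Real.sq_sqrt hB] at this
    linarith
  have h₁ := two_le_sobolevConst_sq hL
  have h₂ : 2 * (A / L) ≤ sobolevConst L ^ 2 * A :=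
    calc 2 * (A / L) = 2 / L * A := by ring
      _ ≤ _ := by gcongr; exact two_div_le_sobolevConst_sq hL
  nlinarith

theorem discrete_sobolev (L : ℝ) (hL : 0 < L) (K : ℕ) (hK : 1 ≤ K) (Δx : ℝ)
    (hΔx : Δx = L / K) (v : ℤ → ℂ) (hv : ∀ k : ℤ, v (k + K) = v k) :
    ∀ k : ℤ, ‖v k‖ ≤
      Real.sqrt 2 * max (Real.sqrt L) (1 / Real.sqrt L) *
        Real.sqrt (Δx * ∑ j ∈ Finset.range K, ‖v ((j : ℤ) + 1)‖ ^ 2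
          + Δx * ∑ j ∈ Finset.range K,
              ‖(v ((j : ℤ) + 1 + 1) - v ((j : ℤ) + 1)) / (Δx : ℂ)‖ ^ 2) := by
  intro k
  have hK₀ : (0 : ℝ) < K := by exact_mod_cast hK
  have hΔxK : Δx * K = L := by rw [hΔx, div_mul_cancel₀ _ hK₀.ne']
  have hΔx₀ : 0 < Δx := by rw [hΔx]; positivity
  obtain ⟨y, hy, hvk⟩ := Function.Periodic.exists_mem_Ico (c := (K : ℤ)) hv (by omega) k 1
  obtain ⟨i, rfl⟩ : ∃ i : ℕ, y = i + 1 := ⟨(y - 1).toNat, by simp only [Set.mem_Ico] at hy; omega⟩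
  have hi : i < K := by simp only [Set.mem_Ico] at hy; omega
  have hu : v (((K : ℕ) : ℤ) + 1) = v (((0 : ℕ) : ℤ) + 1) := by rw [add_comm, hv]; simp
  have hcore := sq_norm_le_average_add (u := fun j : ℕ => v (j + 1)) hu hi
  push_cast at hcore
  have hdiff : Δx * ∑ j ∈ range K, ‖(v ((j : ℤ) + 1 + 1) - v ((j : ℤ) + 1)) / (Δx : ℂ)‖ ^ 2 =
      (∑ j ∈ range K, ‖v ((j : ℤ) + 1 + 1) - v ((j : ℤ) + 1)‖ ^ 2) / Δx := by
    simp only [norm_div, Complex.norm_of_nonneg hΔx₀.le, div_pow, ← sum_div]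
    field_simp
  rw [hvk, hdiff, ← pow_le_pow_iff_left₀ (norm_nonneg _) (by positivity) two_ne_zero,
    ← sobolevConst, mul_pow, Real.sq_sqrt (by positivity)]
  exact le_sobolevConst_sq_mul hL hΔxK (by positivity) (by positivity) hcore
end

section
/- For the DVDM scheme for the Zakharov equations, the discrete norm is conserved: if (E^(m), N^(m), V^(m)) and (E^(m+1), N^(m+1), V^(m+1)) are K-periodic sequences satisfying i·δ⁺ₜE^(m)_k = -δ⁽²⁾ₓ μ⁺ₜE^(m)_k + (μ⁺ₜN^(m)_k)(μ⁺ₜE^(m)_k) for all k (with N real-valued), then ‖E^(m+1)‖² = ‖E^(m)‖², where ‖E‖² = Δx Σ_{k=1}^K |E_k|². -/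
/-!
Test the scheme at site `k` against `conj S_k`, where `S = E^(m+1) + E^(m)`, and take imaginary
parts. The time difference gives `(|E^(m+1)_k|² - |E^(m)_k|²) / Δt`; the nonlinear term is a real
multiple of `|S_k|²` and drops out; the discrete Laplacian leaves the difference of the flux
`Im (S_(k+1) conj S_k)` at two neighbouring sites, which telescopes to zero over a period.
-/

open Finset ComplexConjugate

theorem Function.Periodic.sum_range_sub_eq_zero {M : Type*} [AddCommGroup M] {f : ℤ → M}
    {K : ℕ} (hf : Function.Periodic f K) : ∑ k ∈ range K, (f (k + 1) - f k) = 0 := by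
  have htele := sum_range_sub (fun k : ℕ => f k) K
  push_cast at htele
  rw [htele, ← zero_add (K : ℤ), hf, sub_self]

theorem Complex.im_I_mul_sub_mul_conj_add (a b : ℂ) :
    (Complex.I * (a - b) * conj (a + b)).im = ‖a‖ ^ 2 - ‖b‖ ^ 2 := by
  simp only [Complex.sq_norm, Complex.normSq_apply, Complex.mul_im, Complex.mul_re,
    Complex.I_re, Complex.I_im, Complex.conj_re, Complex.conj_im, Complex.add_re,
    Complex.add_im, Complex.sub_re, Complex.sub_im]
  ring

theorem norm_sq_sub_norm_sq_of_dvdm_step {a b p q : ℂ} {n Δt Δx : ℝ} (hΔt : Δt ≠ 0)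
    (h : Complex.I * ((a - b) / Δt)
      = -((p / 2 - 2 * ((a + b) / 2) + q / 2) / (Δx : ℂ) ^ 2) + (n : ℂ) * ((a + b) / 2)) :
    ‖a‖ ^ 2 - ‖b‖ ^ 2
      = -(Δt / (2 * Δx ^ 2)) * ((p * conj (a + b)).im - ((a + b) * conj q).im) := by
  -- With `(Δx²)⁻¹` named as a real number the identity is polynomial in real and imaginary parts.
  set c : ℝ := (Δx ^ 2)⁻¹ with hc
  have hc' : ((Δx : ℂ) ^ 2)⁻¹ = c := by push_cast [hc]; rfl
  rw [mul_div_assoc', div_eq_iff (by exact_mod_cast hΔt), div_eq_mul_inv _ ((Δx : ℂ) ^ 2),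
    hc'] at h
  have him := congrArg (fun z => (z * conj (a + b)).im) h
  rw [← Complex.im_I_mul_sub_mul_conj_add, div_eq_mul_inv, mul_inv, ← hc]
  simp only [Complex.mul_im, Complex.mul_re,
    Complex.I_re, Complex.I_im, Complex.conj_re, Complex.conj_im, Complex.add_re,
    Complex.add_im, Complex.sub_re, Complex.sub_im, Complex.neg_re, Complex.neg_im,
    Complex.ofReal_re, Complex.ofReal_im, Complex.div_ofNat_re, Complex.div_ofNat_im,
    Complex.re_ofNat, Complex.im_ofNat] at him ⊢
  linear_combination him

theorem dvdm_norm_conservation_general (K : ℕ) (Δt Δx : ℝ) (hΔt : 0 < Δt)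
    (Em Em1 : ℤ → ℂ) (Nm Nm1 : ℤ → ℝ)
    (hEm : ∀ k : ℤ, Em (k + K) = Em k) (hEm1 : ∀ k : ℤ, Em1 (k + K) = Em1 k)
    (hscheme : ∀ k : ℤ,
      Complex.I * ((Em1 k - Em k) / (Δt : ℂ))
        = -(((Em1 (k + 1) + Em (k + 1)) / 2 - 2 * ((Em1 k + Em k) / 2)
              + (Em1 (k - 1) + Em (k - 1)) / 2) / ((Δx : ℂ) ^ 2))
          + (((Nm1 k + Nm k) / 2 : ℝ) : ℂ) * ((Em1 k + Em k) / 2)) :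
    Δx * ∑ k ∈ Finset.range K, ‖Em1 ((k : ℤ) + 1)‖ ^ 2
      = Δx * ∑ k ∈ Finset.range K, ‖Em ((k : ℤ) + 1)‖ ^ 2 := by
  set S : ℤ → ℂ := fun k => Em1 k + Em k
  set flux : ℤ → ℝ := fun k => (S (k + 1) * conj (S k)).im
  have hflux : Function.Periodic flux K := fun k => by
    simp only [flux, S, add_right_comm k (K : ℤ) 1, hEm, hEm1]
  have hstep : ∀ k : ℤ, ‖Em1 (k + 1)‖ ^ 2 - ‖Em (k + 1)‖ ^ 2
      = -(Δt / (2 * Δx ^ 2)) * (flux (k + 1) - flux k) := fun k => by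
    simpa [flux, S] using norm_sq_sub_norm_sq_of_dvdm_step hΔt.ne' (hscheme (k + 1))
  have hsum : ∑ k ∈ range K, (‖Em1 ((k : ℤ) + 1)‖ ^ 2 - ‖Em ((k : ℤ) + 1)‖ ^ 2) = 0 := by
    simp_rw [hstep, ← mul_sum, hflux.sum_range_sub_eq_zero, mul_zero]
  rw [sum_sub_distrib, sub_eq_zero] at hsum
  rw [hsum]

theorem dvdm_norm_conservation (K : ℕ) (hK : 1 ≤ K) (Δt Δx : ℝ) (hΔt : 0 < Δt)
    (hΔx : 0 < Δx) (Em Em1 : ℤ → ℂ) (Nm Nm1 : ℤ → ℝ)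
    (hEm : ∀ k : ℤ, Em (k + K) = Em k) (hEm1 : ∀ k : ℤ, Em1 (k + K) = Em1 k)
    (hNm : ∀ k : ℤ, Nm (k + K) = Nm k) (hNm1 : ∀ k : ℤ, Nm1 (k + K) = Nm1 k)
    (hscheme : ∀ k : ℤ,
      Complex.I * ((Em1 k - Em k) / (Δt : ℂ))
        = -(((Em1 (k + 1) + Em (k + 1)) / 2 - 2 * ((Em1 k + Em k) / 2)
              + (Em1 (k - 1) + Em (k - 1)) / 2) / ((Δx : ℂ) ^ 2))
          + (((Nm1 k + Nm k) / 2 : ℝ) : ℂ) * ((Em1 k + Em k) / 2)) :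
    Δx * ∑ k ∈ Finset.range K, ‖Em1 ((k : ℤ) + 1)‖ ^ 2
      = Δx * ∑ k ∈ Finset.range K, ‖Em ((k : ℤ) + 1)‖ ^ 2 :=
  dvdm_norm_conservation_general K Δt Δx hΔt Em Em1 Nm Nm1 hEm hEm1 hscheme
end
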